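/- Let z: {1,...,n} → ℝ be a piecewise-linear profile that is affine on the interval [i, j] between two samples, and suppose all second-order differences s_k = sign(z_{k-1} - 2z_k + z_{k+1}) for i < k < j are zero except possibly at the endpoints. Then for the second-order difference operator restricted to the unsampled interior, there exists u with the interior linear system D^{(k)} u = 0 solved by a choice satisfying both boundary sign conditions and ‖u‖_∞ ≤ 1. -/
import Mathlib


/-- The m×m symmetric tridiagonal Toeplitz matrix with diagonal -2 and off-diagonal 1. -/
def Tmat (m : ℕ) : Matrix (Fin m) (Fin m) ℝ :=
  fun i j => if i = j then -2 else if Nat.dist i.1 j.1 = 1 then 1 else 0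

/-- For each segment block of the second-order difference operator (a tridiagonal Toeplitz
    matrix T with diagonal -2, off-diagonals 1) and boundary sign conditions ±(+1 at the
    first entry, -1 at the last), the system T û = ±(e₁ - e_m) admits a solution with
    ‖û‖_∞ ≤ 1. -/
theorem stmt12 (m : ℕ) (s : ℝ) (hs : s = 1 ∨ s = -1) :
    ∃ u : Fin m → ℝ,
      (Tmat m).mulVec u =
        (fun k : Fin m =>
          s * ((if (k : ℕ) = 0 then (1 : ℝ) else 0) - (if (k : ℕ) = m - 1 then 1 else 0))) ∧
      ∀ k, |u k| ≤ 1 := by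
  set u : Fin m → ℝ := fun k => s * (2*(k:ℝ) - ((m:ℝ)-1)) / ((m:ℝ)+1) with hu
  refine ⟨u, ?_, ?_⟩
  · funext k
    have hm : 0 < m := k.pos
    have hM : (0:ℝ) < (m:ℝ)+1 := by positivity
    have hrow : ∀ j : Fin m, Tmat m k j * u j =
        (if j = k then -2 * u j else 0) + (if (j:ℕ) = (k:ℕ) + 1 then u j else 0)
          + (if (j:ℕ) + 1 = (k:ℕ) then u j else 0) := by
      intro j
      unfold Tmat
      rcases eq_or_ne k j with h | h
      · subst h
        simp
      · have hne : ¬ (j = k) := fun hh => h hh.symm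
        simp only [if_neg h, if_neg hne]
        by_cases h1 : (j:ℕ) = (k:ℕ) + 1
        · have : Nat.dist k.1 j.1 = 1 := by simp [Nat.dist]; omega
          have h2 : ¬ ((j:ℕ) + 1 = (k:ℕ)) := by omega
          rw [if_pos this, if_pos h1, if_neg h2]; ring
        · by_cases h2 : (j:ℕ) + 1 = (k:ℕ)
          · have : Nat.dist k.1 j.1 = 1 := by simp [Nat.dist]; omega
            rw [if_pos this, if_neg h1, if_pos h2]; ring
          · have hd : Nat.dist k.1 j.1 ≠ 1 := by
              have : (k:ℕ) ≠ (j:ℕ) := fun hh => h (Fin.ext hh)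
              simp [Nat.dist]; omega
            rw [if_neg hd, if_neg h1, if_neg h2]; ring
    have hmv : (Tmat m).mulVec u k =
        -2 * u k + (if h : (k:ℕ) + 1 < m then u ⟨(k:ℕ)+1, h⟩ else 0)
          + (if h : 0 < (k:ℕ) then u ⟨(k:ℕ)-1, by omega⟩ else 0) := by
      unfold Matrix.mulVec dotProduct
      rw [Finset.sum_congr rfl (fun j _ => hrow j)]
      rw [Finset.sum_add_distrib, Finset.sum_add_distrib]
      congr 1
      · congr 1
        · simp [Finset.sum_ite_eq']
        · by_cases h : (k:ℕ) + 1 < m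
          · rw [dif_pos h, Finset.sum_eq_single (⟨(k:ℕ)+1, h⟩ : Fin m)]
            · simp
            · intro b _ hb
              have : (b:ℕ) ≠ (k:ℕ)+1 := fun hh => hb (Fin.ext hh)
              simp [this]
            · simp
          · rw [dif_neg h]
            apply Finset.sum_eq_zero
            intro b _
            have : (b:ℕ) ≠ (k:ℕ)+1 := by have := b.2; omega
            simp [this]
      · by_cases h : 0 < (k:ℕ)
        · rw [dif_pos h, Finset.sum_eq_single (⟨(k:ℕ)-1, by omega⟩ : Fin m)]
          · simp; omega
          · intro b _ hb
            have : ¬ ((b:ℕ) + 1 = (k:ℕ)) := by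
              intro hh; apply hb; apply Fin.ext; simp; omega
            simp [this]
          · simp
        · rw [dif_neg h]
          apply Finset.sum_eq_zero
          intro b _
          have : ¬ ((b:ℕ) + 1 = (k:ℕ)) := by omega
          simp [this]
    rw [hmv]
    have hmcast : ((m:ℝ)) ≥ 1 := by exact_mod_cast hm
    by_cases h0 : (k:ℕ) = 0
    · by_cases hlast : (k:ℕ) = m - 1
      · -- m = 1
        have hm1 : m = 1 := by omega
        have : ¬ ((k:ℕ) + 1 < m) := by omega
        have h0' : ¬ (0 < (k:ℕ)) := by omega
        rw [dif_neg this, dif_neg h0']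
        rw [if_pos h0, if_pos hlast]
        simp [hu, hm1, h0]
      · have hlt : (k:ℕ) + 1 < m := by omega
        rw [dif_pos hlt, dif_neg (by omega : ¬ 0 < (k:ℕ))]
        rw [if_pos h0, if_neg hlast]
        simp only [hu]
        push_cast [h0]
        field_simp
        ring
    · by_cases hlast : (k:ℕ) = m - 1
      · have : ¬ ((k:ℕ) + 1 < m) := by omega
        rw [dif_neg this, dif_pos (by omega : 0 < (k:ℕ))]
        rw [if_neg h0, if_pos hlast]
        simp only [hu]
        have hc1 : (((k:ℕ) - 1 : ℕ) : ℝ) = (k:ℕ) - 1 := by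
          push_cast [Nat.cast_sub (by omega : 1 ≤ (k:ℕ))]; ring
        have hc2 : ((k:ℕ) : ℝ) = (m:ℝ) - 1 := by
          rw [hlast]; push_cast [Nat.cast_sub (by omega : 1 ≤ m)]; ring
        rw [hc1, hc2]
        field_simp
        ring
      · have hlt : (k:ℕ) + 1 < m := by omega
        rw [dif_pos hlt, dif_pos (by omega : 0 < (k:ℕ))]
        rw [if_neg h0, if_neg hlast]
        simp only [hu]
        have hc1 : (((k:ℕ) - 1 : ℕ) : ℝ) = (k:ℕ) - 1 := by
          push_cast [Nat.cast_sub (by omega : 1 ≤ (k:ℕ))]; ring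
        rw [hc1]
        push_cast
        field_simp
        ring
  · intro k
    have hm : 0 < m := k.pos
    have hM : (0:ℝ) < (m:ℝ)+1 := by positivity
    have hs1 : |s| = 1 := by rcases hs with h | h <;> simp [h]
    have hk : ((k:ℕ) : ℝ) ≤ (m:ℝ) - 1 := by
      have := k.2
      have : ((k:ℕ) : ℝ) + 1 ≤ (m:ℝ) := by exact_mod_cast this
      linarith
    have hk0 : (0:ℝ) ≤ ((k:ℕ) : ℝ) := by positivity
    rw [hu]
    rw [abs_div, abs_mul, hs1, one_mul, abs_of_pos hM, div_le_one hM]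
    rw [abs_le]
    constructor <;> linarith
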